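/- arXiv:1006.3141 — 4 statements merged into one kernel-verified Lean document; each statement's English description precedes it below -/
import Mathlib

section
/- In the nearest-common-ancestor labeling of a rooted tree based on heavy-path decomposition, where the root gets label (id(root), 0), a heavy child inherits its parent's label with the distance of the last pair incremented by one, and a light child v gets its parent's label with the pair (id(v), 0) appended, every node's label is a list of at most 1 + log₂(n) pairs. -/
/-- A finite rooted tree given by parent pointers: the root is a fixed point of
`parent`, and iterating `parent` from any node eventually reaches the root. -/
structure ParentTree (V : Type*) where
  root : V
  parent : V → V
  parent_root : parent root = root
  reaches_root : ∀ v, ∃ k, parent^[k] v = root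

variable {V : Type*}

/-- The number of nodes in the subtree rooted at `v`. -/
noncomputable def ParentTree.size (t : ParentTree V) (v : V) : ℕ :=
  Set.ncard {u | ∃ k, t.parent^[k] u = v}

/-- The depth of a node: its distance to the root. -/
def ParentTree.depth [DecidableEq V] (t : ParentTree V) (v : V) : ℕ :=
  Nat.find (t.reaches_root v)

/-- `c` is a child of `u`. -/
def ParentTree.IsChild (t : ParentTree V) (c u : V) : Prop :=
  c ≠ u ∧ t.parent c = u

/-- `heavy` designates, for every internal node `u`, exactly one child of `u`
whose subtree size is maximal among all children of `u`. -/
def HeavyValid (t : ParentTree V) (heavy : V → V) : Prop :=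
  ∀ u, (∃ c, t.IsChild c u) →
    t.IsChild (heavy u) u ∧ ∀ c, t.IsChild c u → t.size c ≤ t.size (heavy u)

/-- Increment the distance component of the last pair of a label. -/
def incLast (l : List (ℕ × ℕ)) : List (ℕ × ℕ) :=
  l.dropLast ++ [(l.getLast!.1, l.getLast!.2 + 1)]

/-- `ℓ` is the nearest-common-ancestor labeling of the rooted tree `t` based on
the heavy-path decomposition given by `heavy`: the root is labeled
`[(id root, 0)]`, a heavy child inherits its parent's label with the distance of
the last pair incremented by one, and a light child `v` gets its parent's label
with the pair `(id v, 0)` appended. -/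
def IsNCALabeling (t : ParentTree V) (heavy : V → V) (idf : V → ℕ)
    (ℓ : V → List (ℕ × ℕ)) : Prop :=
  ℓ t.root = [(idf t.root, 0)] ∧
  ∀ v, v ≠ t.root →
    (heavy (t.parent v) = v → ℓ v = incLast (ℓ (t.parent v))) ∧
    (heavy (t.parent v) ≠ v → ℓ v = ℓ (t.parent v) ++ [(idf v, 0)])

/-- `a` is an ancestor of `v` (possibly `v` itself). -/
def ParentTree.Anc (t : ParentTree V) (a v : V) : Prop :=
  ∃ k, t.parent^[k] v = a

/-- `a` is the nearest common ancestor of `u` and `v`: a common ancestor such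
that every common ancestor of `u` and `v` is an ancestor of `a`. -/
def IsNca (t : ParentTree V) (a u v : V) : Prop :=
  t.Anc a u ∧ t.Anc a v ∧ ∀ b, t.Anc b u → t.Anc b v → t.Anc b a

/-!
If `c` is a light child of `u`, its subtree is disjoint from that of the heavy child of `u`, which
is at least as large, so `2 * size c ≤ size u`. A label gains a pair exactly at light children and
keeps its length at heavy ones, so `2 ^ (ℓ v).length * size v` never increases on the way down from
the root, where it equals `2 * n`. As `size v ≥ 1`, `(ℓ v).length ≤ log₂ (2 * n)`.
-/

namespace ParentTree

variable (t : ParentTree V)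

def subtree (v : V) : Set V := {u | ∃ k, t.parent^[k] u = v}

theorem size_eq_ncard_subtree (v : V) : t.size v = (t.subtree v).ncard := rfl

theorem mem_subtree_self (v : V) : v ∈ t.subtree v := ⟨0, rfl⟩

theorem iterate_parent_root (k : ℕ) : t.parent^[k] t.root = t.root :=
  Function.iterate_fixed t.parent_root k

theorem eq_root_of_iterate_parent_eq_self {u : V} {m : ℕ} (hm : 0 < m)
    (h : t.parent^[m] u = u) : u = t.root := by
  obtain ⟨k, hk⟩ := t.reaches_root u
  calc u = t.parent^[k * m] u := ((Function.IsPeriodicPt.const_mul h k).eq).symm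
    _ = t.parent^[k * m - k] (t.parent^[k] u) := by
        rw [← Function.iterate_add_apply, Nat.sub_add_cancel (Nat.le_mul_of_pos_right k hm)]
    _ = t.root := by rw [hk, iterate_parent_root]

theorem parent_ne_self {v : V} (hv : v ≠ t.root) : t.parent v ≠ v :=
  fun h ↦ hv (t.eq_root_of_iterate_parent_eq_self one_pos h)

theorem isChild_parent {v : V} (hv : v ≠ t.root) : t.IsChild v (t.parent v) :=
  ⟨(t.parent_ne_self hv).symm, rfl⟩

theorem induction_from_root {P : V → Prop} (root : P t.root)
    (child : ∀ v, v ≠ t.root → P (t.parent v) → P v) (v : V) : P v := by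
  obtain ⟨k, hk⟩ := t.reaches_root v
  induction k generalizing v with
  | zero => exact (Function.iterate_zero_apply t.parent v ▸ hk) ▸ root
  | succ k ih =>
    by_cases hv : v = t.root
    · exact hv ▸ root
    · exact child v hv (ih _ (by rwa [Function.iterate_succ_apply] at hk))

variable {t}

theorem IsChild.eq_of_iterate_parent_eq {c₁ c₂ u : V} (h₁ : t.IsChild c₁ u)
    (h₂ : t.IsChild c₂ u) {m : ℕ} (h : t.parent^[m] c₁ = c₂) : c₁ = c₂ := by
  cases m with
  | zero => exact h
  | succ j =>
    -- otherwise `u` would be periodic under `parent`, hence the root, and `c₂` would be the root too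
    rw [Function.iterate_succ_apply, h₁.2] at h
    have hu : t.parent^[j + 1] u = u := by rw [Function.iterate_succ_apply', h, h₂.2]
    obtain rfl := t.eq_root_of_iterate_parent_eq_self j.succ_pos hu
    exact absurd (h.symm.trans (t.iterate_parent_root j)) h₂.1

theorem IsChild.disjoint_subtree {c₁ c₂ u : V} (h₁ : t.IsChild c₁ u) (h₂ : t.IsChild c₂ u)
    (hne : c₁ ≠ c₂) : Disjoint (t.subtree c₁) (t.subtree c₂) := by
  refine Set.disjoint_left.mpr ?_
  rintro w ⟨j, rfl⟩ ⟨k, hk⟩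
  rcases le_total j k with hjk | hkj
  · refine hne (h₁.eq_of_iterate_parent_eq h₂ (m := k - j) ?_)
    rw [← Function.iterate_add_apply, Nat.sub_add_cancel hjk, hk]
  · refine hne (h₂.eq_of_iterate_parent_eq h₁ (m := j - k) ?_).symm
    rw [← hk, ← Function.iterate_add_apply, Nat.sub_add_cancel hkj]

theorem subtree_subset_subtree_parent (v : V) : t.subtree v ⊆ t.subtree (t.parent v) :=
  fun _ ⟨k, hk⟩ ↦ ⟨k + 1, by rw [Function.iterate_succ_apply', hk]⟩

section Finite

variable [Finite V]

theorem size_pos (v : V) : 0 < t.size v :=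
  (Set.ncard_pos (Set.toFinite _)).mpr ⟨v, t.mem_subtree_self v⟩

theorem size_le_size_parent (v : V) : t.size v ≤ t.size (t.parent v) :=
  Set.ncard_le_ncard (t.subtree_subset_subtree_parent v) (Set.toFinite _)

theorem IsChild.size_add_size_le {c₁ c₂ u : V} (h₁ : t.IsChild c₁ u) (h₂ : t.IsChild c₂ u)
    (hne : c₁ ≠ c₂) : t.size c₁ + t.size c₂ ≤ t.size u := by
  rw [size_eq_ncard_subtree, size_eq_ncard_subtree,
    ← Set.ncard_union_eq (h₁.disjoint_subtree h₂ hne) (Set.toFinite _) (Set.toFinite _)]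
  refine Set.ncard_le_ncard (Set.union_subset ?_ ?_) (Set.toFinite _)
  · exact h₁.2 ▸ t.subtree_subset_subtree_parent c₁
  · exact h₂.2 ▸ t.subtree_subset_subtree_parent c₂

theorem _root_.HeavyValid.two_mul_size_le_of_ne {heavy : V → V} (hheavy : HeavyValid t heavy)
    {c u : V} (hc : t.IsChild c u) (hlight : heavy u ≠ c) : 2 * t.size c ≤ t.size u := by
  obtain ⟨hh, hmax⟩ := hheavy u ⟨c, hc⟩
  have := hh.size_add_size_le hc hlight
  have := hmax c hc
  omega

end Finite

theorem size_root [Fintype V] : t.size t.root = Fintype.card V := by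
  have : t.subtree t.root = Set.univ := Set.eq_univ_of_forall t.reaches_root
  rw [size_eq_ncard_subtree, this, Set.ncard_univ, Nat.card_eq_fintype_card]

end ParentTree

theorem incLast_ne_nil (l : List (ℕ × ℕ)) : incLast l ≠ [] := by
  simp [incLast]

theorem length_incLast {l : List (ℕ × ℕ)} (hl : l ≠ []) : (incLast l).length = l.length := by
  have := List.length_pos_iff.mpr hl
  simp only [incLast, List.length_append, List.length_dropLast, List.length_singleton]
  omega

namespace IsNCALabeling

variable {t : ParentTree V} {heavy : V → V} {idf : V → ℕ} {ℓ : V → List (ℕ × ℕ)}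

theorem label_ne_nil (hl : IsNCALabeling t heavy idf ℓ) (v : V) : ℓ v ≠ [] := by
  by_cases hv : v = t.root
  · simp [hv, hl.1]
  by_cases hh : heavy (t.parent v) = v
  · rw [(hl.2 v hv).1 hh]
    exact incLast_ne_nil _
  · simp [(hl.2 v hv).2 hh]

theorem length_label_of_heavy (hl : IsNCALabeling t heavy idf ℓ) {v : V} (hv : v ≠ t.root)
    (hh : heavy (t.parent v) = v) : (ℓ v).length = (ℓ (t.parent v)).length := by
  rw [(hl.2 v hv).1 hh, length_incLast (hl.label_ne_nil _)]

theorem length_label_of_light (hl : IsNCALabeling t heavy idf ℓ) {v : V} (hv : v ≠ t.root)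
    (hh : heavy (t.parent v) ≠ v) : (ℓ v).length = (ℓ (t.parent v)).length + 1 := by
  rw [(hl.2 v hv).2 hh, List.length_append, List.length_singleton]

theorem two_pow_length_mul_size_le [Finite V] (hheavy : HeavyValid t heavy)
    (hl : IsNCALabeling t heavy idf ℓ) (v : V) :
    2 ^ (ℓ v).length * t.size v ≤ 2 * t.size t.root := by
  induction v using t.induction_from_root with
  | root => simp [hl.1]
  | child v hv ih =>
    by_cases hh : heavy (t.parent v) = v
    · calc 2 ^ (ℓ v).length * t.size v
          ≤ 2 ^ (ℓ (t.parent v)).length * t.size (t.parent v) := by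
            rw [hl.length_label_of_heavy hv hh]
            exact Nat.mul_le_mul_left _ (t.size_le_size_parent v)
        _ ≤ 2 * t.size t.root := ih
    · calc 2 ^ (ℓ v).length * t.size v
          = 2 ^ (ℓ (t.parent v)).length * (2 * t.size v) := by
            rw [hl.length_label_of_light hv hh, pow_succ, mul_assoc]
        _ ≤ 2 ^ (ℓ (t.parent v)).length * t.size (t.parent v) :=
            Nat.mul_le_mul_left _ (hheavy.two_mul_size_le_of_ne (t.isChild_parent hv) hh)
        _ ≤ 2 * t.size t.root := ih

end IsNCALabeling

theorem label_length_le_general [Fintype V]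
    (t : ParentTree V) (heavy : V → V) (idf : V → ℕ) (ℓ : V → List (ℕ × ℕ))
    (hheavy : HeavyValid t heavy)
    (hl : IsNCALabeling t heavy idf ℓ) :
    ∀ v, (ℓ v).length ≤ 1 + Nat.log 2 (Fintype.card V) := by
  intro v
  have hcard : Fintype.card V ≠ 0 := (Fintype.card_pos_iff.mpr ⟨t.root⟩).ne'
  have hpow : 2 ^ (ℓ v).length ≤ Fintype.card V * 2 :=
    calc 2 ^ (ℓ v).length ≤ 2 ^ (ℓ v).length * t.size v :=
          Nat.le_mul_of_pos_right _ (t.size_pos v)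
      _ ≤ 2 * t.size t.root := hl.two_pow_length_mul_size_le hheavy v
      _ = Fintype.card V * 2 := by rw [t.size_root, mul_comm]
  have hlog := (Nat.le_log_iff_pow_le one_lt_two (by positivity)).mpr hpow
  rwa [Nat.log_mul_base one_lt_two hcard, add_comm] at hlog

/-- In the heavy-path NCA labeling of a rooted tree on `n` nodes, every node's
label is a list of at most `1 + log₂ n` pairs. -/
theorem label_length_le [Fintype V]
    (t : ParentTree V) (heavy : V → V) (idf : V → ℕ) (ℓ : V → List (ℕ × ℕ))
    (hheavy : HeavyValid t heavy) (hid : Function.Injective idf)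
    (hl : IsNCALabeling t heavy idf ℓ) :
    ∀ v, (ℓ v).length ≤ 1 + Nat.log 2 (Fintype.card V) :=
  label_length_le_general t heavy idf ℓ hheavy hl
end

section
/- In the nearest-common-ancestor labeling of a rooted tree based on heavy-path decomposition, distinct nodes receive distinct labels. -/
variable {V : Type*}

/-! The last pair `(i, d)` of a label records that the node lies on the heavy path whose topmost
node has identifier `i`, at distance `d` below it; as identifiers are distinct, this pins down
the node. -/

namespace ParentTree

theorem induction_on_parent (t : ParentTree V) {P : V → Prop} (root : P t.root)
    (step : ∀ v, v ≠ t.root → P (t.parent v) → P v) (v : V) : P v := by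
  obtain ⟨k, hk⟩ := t.reaches_root v
  induction k generalizing v with
  | zero => rwa [show v = t.root from hk]
  | succ k ih =>
    by_cases hv : v = t.root
    · rwa [hv]
    · exact step v hv (ih _ (by rwa [← Function.iterate_succ_apply]))

end ParentTree

theorem getLast!_incLast (l : List (ℕ × ℕ)) :
    (incLast l).getLast! = (l.getLast!.1, l.getLast!.2 + 1) := by
  simp [incLast]

theorem IsNCALabeling.exists_iterate_heavy_eq {t : ParentTree V} {heavy : V → V}
    {idf : V → ℕ} {ℓ : V → List (ℕ × ℕ)} (hl : IsNCALabeling t heavy idf ℓ) (v : V) :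
    ∃ a, idf a = (ℓ v).getLast!.1 ∧ heavy^[(ℓ v).getLast!.2] a = v := by
  induction v using t.induction_on_parent with
  | root => exact ⟨t.root, by simp [hl.1], by simp [hl.1]⟩
  | step v hv ih =>
    obtain ⟨a, ha, hpath⟩ := ih
    by_cases hheavy : heavy (t.parent v) = v
    · rw [(hl.2 v hv).1 hheavy, getLast!_incLast]
      exact ⟨a, ha, by rw [Function.iterate_succ_apply', hpath, hheavy]⟩
    · rw [(hl.2 v hv).2 hheavy]
      exact ⟨v, by simp, by simp⟩

theorem label_injective_general
    (t : ParentTree V) (heavy : V → V) (idf : V → ℕ) (ℓ : V → List (ℕ × ℕ))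
    (hid : Function.Injective idf)
    (hl : IsNCALabeling t heavy idf ℓ) :
    Function.Injective ℓ := by
  intro u v huv
  obtain ⟨a, ha, hu⟩ := hl.exists_iterate_heavy_eq u
  obtain ⟨b, hb, hv⟩ := hl.exists_iterate_heavy_eq v
  rw [huv] at ha hu
  obtain rfl := hid (ha.trans hb.symm)
  exact hu.symm.trans hv

/-- In the heavy-path NCA labeling of a rooted tree with distinct node
identifiers, distinct nodes receive distinct labels. -/
theorem label_injective [Fintype V]
    (t : ParentTree V) (heavy : V → V) (idf : V → ℕ) (ℓ : V → List (ℕ × ℕ))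
    (hheavy : HeavyValid t heavy) (hid : Function.Injective idf)
    (hl : IsNCALabeling t heavy idf ℓ) :
    Function.Injective ℓ :=
  label_injective_general t heavy idf ℓ hid hl
end

section
/- In the nearest-common-ancestor labeling based on heavy-path decomposition, for any node v, the label of v's parent is either a proper prefix of v's label, or equals v's label except that the last pair's distance component is one smaller. Consequently, every proper prefix of a node's label (ending at a pair boundary, with arbitrary smaller final distance) corresponds to an ancestor of that node. -/
variable {V : Type*}

lemma myGetLast! : ∀ (l : List (ℕ×ℕ)) (h : l ≠ []), l.getLast! = l.getLast h := by
  intro l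
  induction l with
  | nil => intro h; exact absurd rfl h
  | cons a t ih =>
    intro h
    cases t with
    | nil => rfl
    | cons b t' => simp [List.getLast!, List.getLast] at *

lemma label_ne_nil (t : ParentTree V) (heavy : V → V) (idf : V → ℕ)
    (ℓ : V → List (ℕ × ℕ)) (hl : IsNCALabeling t heavy idf ℓ) (v : V) :
    ℓ v ≠ [] := by
  by_cases h : v = t.root
  · subst h; rw [hl.1]; simp
  · rcases hl.2 v h with ⟨h1, h2⟩
    by_cases hh : heavy (t.parent v) = v
    · rw [h1 hh]; unfold incLast; simp
    · rw [h2 hh]; simp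

/-- First part: the parent's label is a proper prefix or a last-decrement. -/
lemma nca_step (t : ParentTree V) (heavy : V → V) (idf : V → ℕ)
    (ℓ : V → List (ℕ × ℕ)) (hl : IsNCALabeling t heavy idf ℓ)
    (v : V) (hv : v ≠ t.root) :
    (∃ s, s ≠ [] ∧ ℓ v = ℓ (t.parent v) ++ s) ∨
    (∃ (l : List (ℕ × ℕ)) (a₀ a₁ : ℕ),
      ℓ (t.parent v) = l ++ [(a₀, a₁)] ∧ ℓ v = l ++ [(a₀, a₁ + 1)]) := by
  rcases hl.2 v hv with ⟨h1, h2⟩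
  by_cases hh : heavy (t.parent v) = v
  · right
    have hne := label_ne_nil t heavy idf ℓ hl (t.parent v)
    refine ⟨(ℓ (t.parent v)).dropLast, ((ℓ (t.parent v)).getLast hne).1,
      ((ℓ (t.parent v)).getLast hne).2, ?_, ?_⟩
    · rw [List.dropLast_append_getLast hne]
    · rw [h1 hh]; unfold incLast; rw [myGetLast! _ hne]
  · left
    exact ⟨[(idf v, 0)], by simp, h2 hh⟩

lemma depth_parent_lt [DecidableEq V] (t : ParentTree V) (v : V) (hv : v ≠ t.root) :
    t.depth (t.parent v) < t.depth v := by
  have h1 : t.parent^[t.depth v] v = t.root := Nat.find_spec (t.reaches_root v)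
  have hpos : 0 < t.depth v := by
    rcases Nat.eq_zero_or_pos (t.depth v) with h | h
    · rw [h] at h1; exact absurd h1 hv
    · exact h
  have h2 : t.parent^[t.depth v - 1] (t.parent v) = t.root := by
    rw [← Function.iterate_succ_apply]
    rw [Nat.succ_eq_add_one, Nat.sub_add_cancel hpos]
    exact h1
  calc t.depth (t.parent v) ≤ t.depth v - 1 := Nat.find_min' _ h2
    _ < t.depth v := Nat.sub_lt hpos one_pos

lemma anc_refl (t : ParentTree V) (v : V) : t.Anc v v := ⟨0, rfl⟩

lemma anc_of_parent (t : ParentTree V) {u v : V} (h : t.Anc u (t.parent v)) :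
    t.Anc u v := by
  obtain ⟨k, hk⟩ := h
  exact ⟨k + 1, by rw [Function.iterate_succ_apply]; exact hk⟩

lemma nca_key [DecidableEq V] (t : ParentTree V) (heavy : V → V) (idf : V → ℕ)
    (ℓ : V → List (ℕ × ℕ)) (hl : IsNCALabeling t heavy idf ℓ) :
    ∀ n (v : V), t.depth v = n → ∀ (l : List (ℕ × ℕ)) (a₀ a₁ d : ℕ) (s : List (ℕ × ℕ)),
      ℓ v = l ++ (a₀, a₁) :: s → d ≤ a₁ →
      ∃ u, t.Anc u v ∧ ℓ u = l ++ [(a₀, d)] := by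
  intro n
  induction n using Nat.strong_induction_on with
  | _ n ih =>
  intro v hdep l a₀ a₁ d s hv hd
  by_cases hroot : v = t.root
  · subst hroot
    rw [hl.1] at hv
    have hlen := congrArg List.length hv
    simp [List.length_append] at hlen
    have hl0 : l = [] := List.length_eq_zero_iff.mp (by omega)
    have hs0 : s = [] := List.length_eq_zero_iff.mp (by omega)
    subst hl0; subst hs0
    simp at hv
    obtain ⟨h0, h1⟩ := hv
    have hd0 : d = 0 := by omega
    refine ⟨t.root, anc_refl t _, ?_⟩
    rw [hl.1, h0, hd0]
    rfl
  · have hdp : t.depth (t.parent v) < n := hdep ▸ depth_parent_lt t v hroot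
    rcases hl.2 v hroot with ⟨h1, h2⟩
    by_cases hh : heavy (t.parent v) = v
    · -- heavy case
      have hne := label_ne_nil t heavy idf ℓ hl (t.parent v)
      set m := (ℓ (t.parent v)).dropLast with hm
      set b := (ℓ (t.parent v)).getLast hne with hb
      have hp : ℓ (t.parent v) = m ++ [b] := (List.dropLast_append_getLast hne).symm
      have hvm : ℓ v = m ++ [(b.1, b.2 + 1)] := by
        rw [h1 hh]; unfold incLast; rw [myGetLast! _ hne]
      rcases s.eq_nil_or_concat with hs | ⟨s', y, hs⟩
      · subst hs
        rw [hvm] at hv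
        have := List.append_inj' hv.symm rfl
        obtain ⟨hml, hy⟩ := this
        have hb1 : b.1 = a₀ ∧ b.2 + 1 = a₁ := by
          simp at hy
          exact ⟨hy.1.symm, hy.2.symm⟩
        rcases Nat.lt_or_ge d a₁ with hlt | hge
        · -- d ≤ b.2, recurse on parent
          have hd' : d ≤ b.2 := by omega
          have hp' : ℓ (t.parent v) = l ++ (a₀, b.2) :: [] := by
            rw [hp, hml]; congr 2; exact Prod.ext hb1.1 rfl
          obtain ⟨u, hu1, hu2⟩ := ih _ hdp (t.parent v) rfl l a₀ b.2 d [] hp' hd'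
          exact ⟨u, anc_of_parent t hu1, hu2⟩
        · -- d = a₁, take v itself
          have : d = a₁ := le_antisymm hd hge
          refine ⟨v, anc_refl t v, ?_⟩
          rw [hvm, hml, this]
          congr 2
          exact Prod.ext hb1.1 hb1.2
      · subst hs
        rw [hvm] at hv
        have hv' : (l ++ (a₀, a₁) :: s') ++ [y] = m ++ [(b.1, b.2 + 1)] := by
          simpa using hv.symm
        obtain ⟨hml, _⟩ := List.append_inj' hv' rfl
        have hp' : ℓ (t.parent v) = l ++ (a₀, a₁) :: (s' ++ [b]) := by
          rw [hp, ← hml]; simp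
        obtain ⟨u, hu1, hu2⟩ := ih _ hdp (t.parent v) rfl l a₀ a₁ d (s' ++ [b]) hp' hd
        exact ⟨u, anc_of_parent t hu1, hu2⟩
    · -- light case
      have hvm : ℓ v = ℓ (t.parent v) ++ [(idf v, 0)] := h2 hh
      rcases s.eq_nil_or_concat with hs | ⟨s', y, hs⟩
      · subst hs
        rw [hvm] at hv
        obtain ⟨hml, hy⟩ := List.append_inj' hv rfl
        simp at hy
        have ha₁ : a₁ = 0 := hy.2.symm
        have hd0 : d = 0 := by omega
        refine ⟨v, anc_refl t v, ?_⟩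
        rw [hvm, hml, hd0]
        congr 2
        exact Prod.ext hy.1 rfl
      · subst hs
        rw [hvm] at hv
        have hv' : ℓ (t.parent v) ++ [(idf v, 0)] = (l ++ (a₀, a₁) :: s') ++ [y] := by
          simpa using hv
        obtain ⟨hml, _⟩ := List.append_inj' hv' rfl
        have hp' : ℓ (t.parent v) = l ++ (a₀, a₁) :: s' := by rw [hml]
        obtain ⟨u, hu1, hu2⟩ := ih _ hdp (t.parent v) rfl l a₀ a₁ d s' hp' hd
        exact ⟨u, anc_of_parent t hu1, hu2⟩


/-- In the heavy-path NCA labeling, for any non-root node `v`, the label of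
`v`'s parent is either a proper prefix of `v`'s label, or equals `v`'s label
except that the last pair's distance component is one smaller. Consequently,
every proper prefix of a node's label ending at a pair boundary, with an
arbitrary smaller final distance, corresponds to an ancestor of that node. -/
theorem label_prefix_ancestor [Fintype V]
    (t : ParentTree V) (heavy : V → V) (idf : V → ℕ) (ℓ : V → List (ℕ × ℕ))
    (hheavy : HeavyValid t heavy) (hid : Function.Injective idf)
    (hl : IsNCALabeling t heavy idf ℓ) :
    (∀ v, v ≠ t.root →
        (∃ s, s ≠ [] ∧ ℓ v = ℓ (t.parent v) ++ s) ∨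
        (∃ (l : List (ℕ × ℕ)) (a₀ a₁ : ℕ),
          ℓ (t.parent v) = l ++ [(a₀, a₁)] ∧ ℓ v = l ++ [(a₀, a₁ + 1)])) ∧
    (∀ (v : V) (l : List (ℕ × ℕ)) (a₀ a₁ d : ℕ) (s : List (ℕ × ℕ)),
        ℓ v = l ++ (a₀, a₁) :: s → d ≤ a₁ →
        ∃ u, t.Anc u v ∧ ℓ u = l ++ [(a₀, d)]) := by
  classical
  refine ⟨fun v hv => nca_step t heavy idf ℓ hl v hv, fun v l a₀ a₁ d s hv hd => ?_⟩
  exact nca_key t heavy idf ℓ hl (t.depth v) v rfl l a₀ a₁ d s hv hd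
end

section
/- Let G be a connected weighted graph with distinct edge weights and T its unique minimum spanning tree. If a spanning tree T' of G is obtained from any spanning tree by repeatedly applying the improvement step — replace a tree edge f by a non-tree edge e whenever f lies on the fundamental cycle of e and w(f) > w(e) — until no improvement step applies, then T' = T. -/
open SimpleGraph

variable {V : Type*}

/-- `T` is a spanning tree of `G`: a subgraph of `G` (on the same vertex set)
that is a tree. -/
def IsSpanningTree (G T : SimpleGraph V) : Prop :=
  T ≤ G ∧ T.IsTree

/-- The total weight of (the edges of) a graph. -/
noncomputable def totalWeight (T : SimpleGraph V) (w : Sym2 V → ℝ) : ℝ :=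
  ∑ᶠ e ∈ T.edgeSet, w e

/-- `T` is a minimum spanning tree of `G` with respect to the weights `w`. -/
def IsMST (G T : SimpleGraph V) (w : Sym2 V → ℝ) : Prop :=
  IsSpanningTree G T ∧
    ∀ T' : SimpleGraph V, IsSpanningTree G T' → totalWeight T w ≤ totalWeight T' w

/-! If `T' ≠ T`, pick an edge `uv` of `T` outside `T'`. Deleting `uv` splits `T` into the part
reachable from `u` and the part reachable from `v`, and the `T'`-path from `u` to `v` crosses
between them along an edge `xy`. Stability gives `w xy ≤ w uv`, while `T - uv + xy` is again a
spanning tree, so minimality of `T` gives `w uv ≤ w xy`. Distinct weights force `xy = uv`,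
which contradicts `xy ∈ T'`. -/

namespace SimpleGraph

variable {G T F : SimpleGraph V}

lemma IsTree.eq_of_le (hT : T.IsTree) (hF : F.IsAcyclic) (hle : T ≤ F) : T = F :=
  ((isTree_iff_maximal_isAcyclic.mp hT).2.eq_of_ge hF hle).symm

lemma Connected.reachable_deleteEdges_or (hG : G.Connected) (u v z : V) :
    (G.deleteEdges {s(u, v)}).Reachable u z ∨ (G.deleteEdges {s(u, v)}).Reachable v z := by
  set S := {z | (G.deleteEdges {s(u, v)}).Reachable u z ∨ (G.deleteEdges {s(u, v)}).Reachable v z}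
  by_contra hz
  obtain ⟨p⟩ := hG u z
  obtain ⟨⟨⟨x, y⟩, hxy⟩, -, hx, hy⟩ := p.exists_boundary_dart S (.inl .rfl) hz
  have hne : s(x, y) ≠ s(u, v) := by
    intro h
    rcases Sym2.eq_iff.mp h with ⟨-, rfl⟩ | ⟨-, rfl⟩
    exacts [hy (.inr .rfl), hy (.inl .rfl)]
  have hadj : (G.deleteEdges {s(u, v)}).Adj x y := deleteEdges_adj.mpr ⟨hxy, hne⟩
  exact hy (hx.imp (·.trans hadj.reachable) (·.trans hadj.reachable))

lemma IsTree.isTree_deleteEdges_sup_edge (hT : T.IsTree) {u v x y : V}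
    (hxy : ¬ (T.deleteEdges {s(u, v)}).Reachable x y)
    (hx : (T.deleteEdges {s(u, v)}).Reachable u x) (hy : (T.deleteEdges {s(u, v)}).Reachable v y) :
    (T.deleteEdges {s(u, v)} ⊔ edge x y).IsTree := by
  set H := T.deleteEdges {s(u, v)} ⊔ edge x y
  have hle : T.deleteEdges {s(u, v)} ≤ H := le_sup_left
  have hHxy : H.Adj x y := .inr ((edge_adj ..).mpr ⟨.inl ⟨rfl, rfl⟩, fun h => hxy (h ▸ .rfl)⟩)
  have huv : H.Reachable u v := ((hx.mono hle).trans hHxy.reachable).trans (hy.mono hle).symm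
  have hu : ∀ z, H.Reachable u z := fun z =>
    (hT.connected.reachable_deleteEdges_or u v z).elim (·.mono hle) (huv.trans <| ·.mono hle)
  have : Nonempty V := ⟨u⟩
  exact ⟨.mk fun a b => (hu a).symm.trans (hu b),
    (hT.isAcyclic.anti (deleteEdges_le _)).sup_edge_of_not_reachable hxy⟩

end SimpleGraph

section totalWeight

variable [Finite V] (w : Sym2 V → ℝ)

lemma totalWeight_deleteEdges_singleton {T : SimpleGraph V} {e : Sym2 V} (he : e ∈ T.edgeSet) :
    totalWeight (T.deleteEdges {e}) w = totalWeight T w - w e := by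
  have hT : T.edgeSet = insert e (T.deleteEdges {e}).edgeSet := by
    rw [edgeSet_deleteEdges, Set.insert_sdiff_singleton, Set.insert_eq_of_mem he]
  rw [eq_sub_iff_add_eq', totalWeight, totalWeight, hT,
    finsum_mem_insert _ (by simp) (Set.toFinite _)]

lemma totalWeight_sup_edge {F : SimpleGraph V} {x y : V} (hne : x ≠ y) (hxy : ¬ F.Adj x y) :
    totalWeight (F ⊔ edge x y) w = totalWeight F w + w s(x, y) := by
  rw [totalWeight, totalWeight, edgeSet_sup, edgeSet_edge_of_ne hne, Set.union_singleton,
    finsum_mem_insert w hxy (Set.toFinite _), add_comm]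

end totalWeight

theorem improvement_stable_is_mst_general [Fintype V]
    (G : SimpleGraph V) (w : Sym2 V → ℝ) (hdist : Set.InjOn w G.edgeSet)
    (T : SimpleGraph V) (hT : IsMST G T w)
    (T' : SimpleGraph V) (hT' : IsSpanningTree G T')
    (hstable : ∀ u v, G.Adj u v → ¬ T'.Adj u v →
        ∀ p : T'.Walk u v, p.IsPath → ∀ f ∈ p.edges, ¬ w s(u, v) < w f) :
    T' = T := by
  obtain ⟨⟨hTG, hT⟩, hmin⟩ := hT
  by_contra hTT'
  obtain ⟨u, v, huv, huv'⟩ : ∃ u v, T.Adj u v ∧ ¬ T'.Adj u v := by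
    by_contra! hle
    exact hTT' (hT.eq_of_le hT'.2.isAcyclic hle).symm
  set F := T.deleteEdges {s(u, v)}
  have hbridge : ¬ F.Reachable u v := isAcyclic_iff_forall_adj_isBridge.mp hT.isAcyclic huv
  obtain ⟨p, hp⟩ := hT'.2.connected.exists_isPath u v
  obtain ⟨⟨⟨x, y⟩, hT'xy⟩, hd, hx, hy⟩ :=
    p.exists_boundary_dart {z | F.Reachable u z} .rfl hbridge
  have hvy : F.Reachable v y := (hT.connected.reachable_deleteEdges_or u v y).resolve_left hy
  have hxy : ¬ F.Reachable x y := fun h => hy (hx.trans h)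
  have hexchange : IsSpanningTree G (F ⊔ edge x y) :=
    ⟨sup_le ((deleteEdges_le _).trans hTG) ((edge_le_iff _).mpr (.inr (hT'.1 hT'xy))),
      hT.isTree_deleteEdges_sup_edge hxy hx hvy⟩
  have hne : x ≠ y := fun h => hxy (h ▸ .rfl)
  have hmin_le := hmin _ hexchange
  rw [totalWeight_sup_edge w hne (fun h => hxy h.reachable),
    totalWeight_deleteEdges_singleton w huv] at hmin_le
  have hstable_le := not_lt.mp (hstable u v (hTG huv) huv' p hp _ (List.mem_map_of_mem hd))
  have heq : s(u, v) = s(x, y) :=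
    hdist (hTG huv) (hT'.1 hT'xy) (le_antisymm (by linarith) hstable_le)
  exact huv' (by rw [← mem_edgeSet, heq]; exact hT'xy)

/-- Let `T` be the unique minimum spanning tree of a connected graph `G` with
pairwise distinct positive edge weights. If `T'` is a spanning tree of `G` to
which no improvement step applies — i.e. there is no non-tree edge `e` and tree
edge `f` on the fundamental cycle of `e` with `w f > w e` — then `T' = T`. -/
theorem improvement_stable_is_mst [Fintype V]
    (G : SimpleGraph V) (w : Sym2 V → ℝ) (hG : G.Connected)
    (hpos : ∀ e ∈ G.edgeSet, 0 < w e) (hdist : Set.InjOn w G.edgeSet)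
    (T : SimpleGraph V) (hT : IsMST G T w)
    (T' : SimpleGraph V) (hT' : IsSpanningTree G T')
    (hstable : ∀ u v, G.Adj u v → ¬ T'.Adj u v →
        ∀ p : T'.Walk u v, p.IsPath → ∀ f ∈ p.edges, ¬ w s(u, v) < w f) :
    T' = T :=
  improvement_stable_is_mst_general G w hdist T hT T' hT' hstable
end
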